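/- There exist ε > 0 and c > 0 such that for every T with 0 < T < ε and every x ∈ ℝ⁶, the Gramian quadratic form satisfies xᵀ·G(T)·x ≥ c·T²·‖x‖². In particular, Φ_v(T) is invertible for all T ∈ (0, ε). -/

import Mathlib

noncomputable section

/-- Euclidean norm of a finite real vector. -/
def vecEnorm {m : ℕ} (v : Fin m → ℝ) : ℝ := Real.sqrt (∑ i, v i ^ 2)

/-- The CWH dynamics matrix. -/
def cwhA (ω : ℝ) : Matrix (Fin 6) (Fin 6) ℝ :=
  !![0, 0, 0, 1, 0, 0;
     0, 0, 0, 0, 1, 0;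
     0, 0, 0, 0, 0, 1;
     3*ω^2, 0, 0, 0, 2*ω, 0;
     0, 0, 0, -2*ω, 0, 0;
     0, 0, -ω^2, 0, 0, 0]

/-- The CWH input matrix `B = [0; I₃]`. -/
def cwhB : Matrix (Fin 6) (Fin 3) ℝ :=
  !![0, 0, 0;
     0, 0, 0;
     0, 0, 0;
     1, 0, 0;
     0, 1, 0;
     0, 0, 1]

/-- State transition matrix `exp(t A)`. -/
def expm (ω t : ℝ) : Matrix (Fin 6) (Fin 6) ℝ := NormedSpace.exp (t • cwhA ω)

/-- Horizontal concatenation of two `6 × 3` blocks into a `6 × 6` matrix. -/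
def blockCat (M N : Matrix (Fin 6) (Fin 3) ℝ) : Matrix (Fin 6) (Fin 6) ℝ :=
  Matrix.of fun i j => if h : (j : ℕ) < 3 then M i ⟨j, h⟩ else N i ⟨(j : ℕ) - 3, by omega⟩

/-- The aggregated impulse matrix `Φ_v(T) = [exp(T A) B  B]`. -/
def Phiv (ω T : ℝ) : Matrix (Fin 6) (Fin 6) ℝ := blockCat (expm ω T * cwhB) cwhB

/-- The two-impulse Gramian `G(T) = Φ_v(T) Φ_v(T)ᵀ`. -/
def gram (ω T : ℝ) : Matrix (Fin 6) (Fin 6) ℝ := Phiv ω T * (Phiv ω T).transpose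

/-- First three components of a 6-vector. -/
def first3 (v : Fin 6 → ℝ) : Fin 3 → ℝ := fun i => v ⟨(i : ℕ), by omega⟩

/-- Last three components of a 6-vector. -/
def last3 (v : Fin 6 → ℝ) : Fin 3 → ℝ := fun i => v ⟨(i : ℕ) + 3, by omega⟩

/-- The stacked two-impulse steering solution. -/
def dVsteer (ω T : ℝ) (x₀ xf : Fin 6 → ℝ) : Fin 6 → ℝ :=
  (Phiv ω T)⁻¹.mulVec (xf - (expm ω T).mulVec x₀)

/-- The fixed-duration two-impulse steering cost `J_T(x₀, x_f)`. -/
def Jfix (ω T : ℝ) (x₀ xf : Fin 6 → ℝ) : ℝ :=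
  vecEnorm (first3 (dVsteer ω T x₀ xf)) + vecEnorm (last3 (dVsteer ω T x₀ xf))

/-- Euclidean operator norm of a `6 × 6` real matrix. -/
def opNorm (M : Matrix (Fin 6) (Fin 6) ℝ) : ℝ :=
  ‖(Matrix.toEuclideanCLM (𝕜 := ℝ) M : EuclideanSpace ℝ (Fin 6) →L[ℝ] EuclideanSpace ℝ (Fin 6))‖

/-! Write `Φ_v(T) = [E B, B]` with `E = exp (T A)`. Then `xᵀ G(T) x = ‖(E B)ᵀ x‖² + ‖Bᵀ x‖²`, and
`(E B)ᵀ x - Bᵀ x = T (A B)ᵀ x + o(T) ‖x‖`. Since `Bᵀ x` and `(A B)ᵀ x` vanish together only at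
`x = 0` (the Kalman rank condition for `[B, A B]`), `‖x‖` is bounded by a multiple of
`‖Bᵀ x‖ + ‖(A B)ᵀ x‖`; for small `T` the `o(T)` term is absorbed and `xᵀ G(T) x ≥ c T² ‖x‖²`.
A Gramian bounded below in this way is invertible, hence so is `Φ_v(T)`. -/

open Matrix WithLp

section Perturbation

variable {V W : Type*} [NormedAddCommGroup V] [NormedSpace ℝ V] [FiniteDimensional ℝ V]
  [NormedAddCommGroup W] [NormedSpace ℝ W]

theorem ContinuousLinearMap.exists_mul_norm_le_norm_add_norm {K L : V →L[ℝ] W}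
    (h : ∀ x, K x = 0 → L x = 0 → x = 0) : ∃ c > 0, ∀ x, c * ‖x‖ ≤ ‖K x‖ + ‖L x‖ := by
  have hinj : Function.Injective (K.prod L) := by
    rw [injective_iff_map_eq_zero]
    exact fun x hx => h x (congrArg Prod.fst hx) (congrArg Prod.snd hx)
  obtain ⟨c, hc, hbound⟩ := antilipschitzWith_iff_exists_mul_le_norm.1
    (((K.prod L : V →ₗ[ℝ] W × W).injective_iff_antilipschitz.1 hinj).imp fun _ => And.right)
  exact ⟨c, hc, fun x => (hbound x).trans (by simp [Prod.norm_def])⟩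

theorem exists_mul_sq_mul_sq_norm_le_of_hasDerivAt {P : ℝ → V →L[ℝ] W} {L : V →L[ℝ] W}
    (hP : HasDerivAt P L 0) (h : ∀ x, P 0 x = 0 → L x = 0 → x = 0) :
    ∃ ε > 0, ∃ c > 0, ∀ T, 0 < T → T < ε → ∀ x,
      c * T ^ 2 * ‖x‖ ^ 2 ≤ ‖P T x‖ ^ 2 + ‖P 0 x‖ ^ 2 := by
  obtain ⟨κ, hκ, hcoercive⟩ := ContinuousLinearMap.exists_mul_norm_le_norm_add_norm h
  obtain ⟨δ, hδ, hremainder⟩ := Metric.eventually_nhds_iff.1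
    ((hasDerivAt_iff_isLittleO.1 hP).def (half_pos hκ))
  refine ⟨min δ 1, lt_min hδ one_pos, κ ^ 2 / 32, by positivity, fun T hT hTε x => ?_⟩
  have hTδ : dist T 0 < δ := by simpa [abs_of_pos hT] using (lt_min_iff.1 hTε).1
  have hT1 : T ≤ 1 := (lt_min_iff.1 hTε).2.le
  have hR : ‖(P T - P 0 - T • L) x‖ ≤ κ / 2 * T * ‖x‖ := by
    have := hremainder hTδ
    simp only [sub_zero, Real.norm_eq_abs, abs_of_pos hT] at this
    exact (ContinuousLinearMap.le_opNorm _ x).trans (by gcongr)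
  have hL : T * ‖L x‖ ≤ ‖P T x‖ + ‖P 0 x‖ + κ / 2 * T * ‖x‖ := by
    have hsplit : T • L x = P T x - P 0 x - (P T - P 0 - T • L) x := by simp
    calc T * ‖L x‖ = ‖T • L x‖ := by rw [norm_smul, Real.norm_of_nonneg hT.le]
      _ ≤ _ := by rw [hsplit]; exact (norm_sub_le _ _).trans (by gcongr; exact norm_sub_le _ _)
  -- `T ‖P 0 x‖ ≤ ‖P 0 x‖` as `T ≤ 1`, and the remainder is half of `κ T ‖x‖`, so it is absorbed.
  have hlin : κ * T * ‖x‖ ≤ 4 * (‖P T x‖ + ‖P 0 x‖) := by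
    have := mul_le_mul_of_nonneg_left (hcoercive x) hT.le
    nlinarith [norm_nonneg (P 0 x), norm_nonneg (P T x)]
  nlinarith [norm_nonneg (P 0 x), norm_nonneg (P T x), sq_nonneg (‖P T x‖ - ‖P 0 x‖),
    mul_nonneg (mul_nonneg hκ.le hT.le) (norm_nonneg x)]

end Perturbation

section TwoImpulse

variable {n m : Type*} [Fintype n] [Fintype m]

theorem dotProduct_self_eq_norm_toLp_sq (x : n → ℝ) : x ⬝ᵥ x = ‖toLp 2 x‖ ^ 2 := by
  rw [← real_inner_self_eq_norm_sq, EuclideanSpace.inner_toLp_toLp, star_trivial]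

theorem dotProduct_mul_transpose_self_mulVec (M : Matrix n m ℝ) (x : n → ℝ) :
    x ⬝ᵥ (M * Mᵀ) *ᵥ x = ‖toLp 2 (Mᵀ *ᵥ x)‖ ^ 2 := by
  rw [← dotProduct_self_eq_norm_toLp_sq, ← mulVec_mulVec, dotProduct_mulVec, mulVec_transpose]

variable [DecidableEq n]

theorem isUnit_of_mul_dotProduct_self_le {M : Matrix n n ℝ} {c : ℝ} (hc : 0 < c)
    (h : ∀ x, c * (x ⬝ᵥ x) ≤ x ⬝ᵥ (M * Mᵀ) *ᵥ x) : IsUnit M := by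
  rw [isUnit_iff_isUnit_det, isUnit_iff_ne_zero, ne_eq, ← exists_vecMul_eq_zero_iff]
  rintro ⟨x, hx0, hx⟩
  have hle := h x
  rw [← mulVec_mulVec, dotProduct_mulVec, mulVec_transpose, hx, dotProduct_zero] at hle
  exact hx0 (dotProduct_self_eq_zero.1 (le_antisymm (nonpos_of_mul_nonpos_right hle hc)
    (by simpa using dotProduct_self_star_nonneg x)))

def transposeMulRightCLM (B : Matrix n m ℝ) :
    Matrix n n ℝ →L[ℝ] EuclideanSpace ℝ n →L[ℝ] EuclideanSpace ℝ m :=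
  LinearMap.toContinuousLinearMap
    { toFun M := LinearMap.toContinuousLinearMap (toLpLin 2 2 (M * B)ᵀ)
      map_add' M N := by rw [Matrix.add_mul, transpose_add, map_add, map_add]
      map_smul' c M := by rw [Matrix.smul_mul, transpose_smul, map_smul, map_smul]; rfl }

@[simp]
theorem transposeMulRightCLM_apply (B : Matrix n m ℝ) (M : Matrix n n ℝ)
    (x : EuclideanSpace ℝ n) : transposeMulRightCLM B M x = toLp 2 ((M * B)ᵀ *ᵥ ofLp x) := rfl

-- Only needed to differentiate `exp`, which itself depends on the topology alone.
attribute [local instance] Matrix.linftyOpNormedRing Matrix.linftyOpNormedAlgebra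

theorem exists_mul_sq_mul_dotProduct_le_two_impulse_gramian {A : Matrix n n ℝ}
    {B : Matrix n m ℝ} (hrank : ∀ x, Bᵀ *ᵥ x = 0 → (A * B)ᵀ *ᵥ x = 0 → x = 0) :
    ∃ ε > 0, ∃ c > 0, ∀ T, 0 < T → T < ε → ∀ x : n → ℝ,
      c * T ^ 2 * (x ⬝ᵥ x) ≤
        x ⬝ᵥ (NormedSpace.exp (T • A) * B * (NormedSpace.exp (T • A) * B)ᵀ + B * Bᵀ) *ᵥ x := by
  set P := fun T : ℝ => transposeMulRightCLM B (NormedSpace.exp (T • A))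
  have hderiv : HasDerivAt P (transposeMulRightCLM B A) 0 := by
    have hexp := hasDerivAt_exp_smul_const (𝕂 := ℝ) A 0
    simp only [zero_smul, NormedSpace.exp_zero, one_mul] at hexp
    exact (transposeMulRightCLM B).hasFDerivAt.comp_hasDerivAt 0 hexp
  have hker : ∀ x, P 0 x = 0 → transposeMulRightCLM B A x = 0 → x = 0 := by
    intro x h0 hA
    have h0' : Bᵀ *ᵥ ofLp x = 0 := by simpa [P] using congrArg ofLp h0
    have hA' : (A * B)ᵀ *ᵥ ofLp x = 0 := by simpa using congrArg ofLp hA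
    simpa using congrArg (toLp 2) (hrank _ h0' hA')
  obtain ⟨ε, hε, c, hc, hbound⟩ := exists_mul_sq_mul_sq_norm_le_of_hasDerivAt hderiv hker
  refine ⟨ε, hε, c, hc, fun T hT hTε x => ?_⟩
  rw [add_mulVec, dotProduct_add, dotProduct_mul_transpose_self_mulVec,
    dotProduct_mul_transpose_self_mulVec, dotProduct_self_eq_norm_toLp_sq]
  simpa [P] using hbound T hT hTε (toLp 2 x)

end TwoImpulse

theorem vecEnorm_sq {m : ℕ} (x : Fin m → ℝ) : vecEnorm x ^ 2 = x ⬝ᵥ x := by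
  rw [vecEnorm, Real.sq_sqrt (by positivity)]
  simp [dotProduct, sq]

theorem blockCat_mul_transpose_self (M N : Matrix (Fin 6) (Fin 3) ℝ) :
    blockCat M N * (blockCat M N)ᵀ = M * Mᵀ + N * Nᵀ := by
  ext i j
  simp [blockCat, Matrix.mul_apply, Fin.sum_univ_succ, add_assoc]

theorem gram_eq (ω T : ℝ) :
    gram ω T = expm ω T * cwhB * (expm ω T * cwhB)ᵀ + cwhB * cwhBᵀ :=
  blockCat_mul_transpose_self _ _

theorem cwh_eq_zero_of_mulVec_eq_zero (ω : ℝ) (x : Fin 6 → ℝ) (hB : cwhBᵀ *ᵥ x = 0)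
    (hAB : (cwhA ω * cwhB)ᵀ *ᵥ x = 0) : x = 0 := by
  simp_all [cwhA, cwhB, funext_iff, mulVec, dotProduct, Fin.sum_univ_succ, Fin.forall_fin_succ]

theorem gramian_quadratic_lower_bound_general (ω : ℝ) :
    ∃ ε > (0 : ℝ), ∃ c > (0 : ℝ), ∀ T : ℝ, 0 < T → T < ε →
      (∀ x : Fin 6 → ℝ,
        c * T ^ 2 * vecEnorm x ^ 2 ≤ dotProduct x ((gram ω T).mulVec x)) ∧
      IsUnit (Phiv ω T) := by
  obtain ⟨ε, hε, c, hc, hbound⟩ :=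
    exists_mul_sq_mul_dotProduct_le_two_impulse_gramian (cwh_eq_zero_of_mulVec_eq_zero ω)
  refine ⟨ε, hε, c, hc, fun T hT hTε => ?_⟩
  have hquad : ∀ x, c * T ^ 2 * (x ⬝ᵥ x) ≤ x ⬝ᵥ gram ω T *ᵥ x := by
    rw [gram_eq]
    exact hbound T hT hTε
  exact ⟨fun x => vecEnorm_sq x ▸ hquad x, isUnit_of_mul_dotProduct_self_le (by positivity) hquad⟩

/-- **Lower bound on the Gramian quadratic form near `T = 0`.**
There exist `ε > 0` and `c > 0` such that for every `T ∈ (0, ε)` and every `x ∈ ℝ⁶`,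
`xᵀ G(T) x ≥ c T² ‖x‖²`; in particular `Φ_v(T)` is invertible for all `T ∈ (0, ε)`. -/
theorem gramian_quadratic_lower_bound (ω : ℝ) (hω : 0 < ω) :
    ∃ ε > (0 : ℝ), ∃ c > (0 : ℝ), ∀ T : ℝ, 0 < T → T < ε →
      (∀ x : Fin 6 → ℝ,
        c * T ^ 2 * vecEnorm x ^ 2 ≤ dotProduct x ((gram ω T).mulVec x)) ∧
      IsUnit (Phiv ω T) :=
  gramian_quadratic_lower_bound_general ω

end
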